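/- arXiv:1510.02290 — 2 statements merged into one kernel-verified Lean document; each statement's English description precedes it below -/
import Mathlib

section
/- Let p ∈ (2, 3), λ > 0, and let f(t) solve the ODE df/dt = λ A f on ℝ² with A = [[−1, 1], [1, −1]] and initial datum f^I having nonnegative entries with f_1^I + f_2^I = 1, so the steady state is f^∞ = (1/2, 1/2). Then the relative entropy e_p generated by ψ_p(σ) = σ^p − 1 − p(σ − 1) satisfies e_p(f(t)|f^∞) ≤ e^{−(p+1)λ t} · e_p(f^I|f^∞) for all t ≥ 0. -/
/-!
On the simplex the relative entropy is `g(u)/2` with `g(u) = (1+u)^p + (1-u)^p - 2` and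
`u = f₁ - f₂`. Along the flow `f₁ + f₂` is conserved and `u` decays like `s = e^{-2λt}`, so the
claim is `g(s u) ≤ s^{(p+1)/2} g(u)` for `s, u ∈ (0,1]`, i.e. that `g(u) / u^{(p+1)/2}` is
nondecreasing, i.e. that `H(u) = 2u g'(u) - (p+1) g(u) ≥ 0`. Since `g'''` and `g''''` are
nonpositive for `p < 3`, `H(u) / u²` is nonincreasing on `(0,1]`, whence
`H(u) ≥ u² H(1) = u² (2(p+1) - 2^p)`; finally `2^p ≤ 2p + 2` by Bernoulli's inequality
for `2^{p-2}`.
-/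

open Real Set

noncomputable def evenRpow (a u : ℝ) : ℝ := (1 + u) ^ a + (1 - u) ^ a

noncomputable def oddRpow (a u : ℝ) : ℝ := (1 + u) ^ a - (1 - u) ^ a

section Rpow

variable {u : ℝ}

lemma hasDerivAt_one_add_rpow (a : ℝ) (hu : -1 < u) :
    HasDerivAt (fun x => (1 + x) ^ a) (a * (1 + u) ^ (a - 1)) u := by
  simpa using ((hasDerivAt_id u).const_add 1).rpow_const (p := a)
    (Or.inl (by simp only [id]; linarith))

lemma hasDerivAt_one_sub_rpow (a : ℝ) (hu : u < 1) :
    HasDerivAt (fun x => (1 - x) ^ a) (-(a * (1 - u) ^ (a - 1))) u := by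
  simpa using ((hasDerivAt_id u).const_sub 1).rpow_const (p := a)
    (Or.inl (by simp only [id]; linarith))

lemma hasDerivAt_evenRpow (a : ℝ) (hu : u ∈ Ioo (-1) 1) :
    HasDerivAt (evenRpow a) (a * oddRpow (a - 1) u) u := by
  refine ((hasDerivAt_one_add_rpow a hu.1).add (hasDerivAt_one_sub_rpow a hu.2)).congr_deriv ?_
  simp only [oddRpow]; ring

lemma hasDerivAt_oddRpow (a : ℝ) (hu : u ∈ Ioo (-1) 1) :
    HasDerivAt (oddRpow a) (a * evenRpow (a - 1) u) u := by
  refine ((hasDerivAt_one_add_rpow a hu.1).sub (hasDerivAt_one_sub_rpow a hu.2)).congr_deriv ?_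
  simp only [evenRpow]; ring

lemma evenRpow_nonneg (a : ℝ) (hu : u ∈ Icc (-1) 1) : 0 ≤ evenRpow a u :=
  add_nonneg (rpow_nonneg (by linarith [hu.1]) a) (rpow_nonneg (by linarith [hu.2]) a)

lemma oddRpow_nonpos {a : ℝ} (ha : a ≤ 0) (hu : u ∈ Ico 0 1) : oddRpow a u ≤ 0 :=
  sub_nonpos.2 (rpow_le_rpow_of_nonpos (by linarith [hu.2]) (by linarith [hu.1]) ha)

lemma continuous_evenRpow {a : ℝ} (ha : 0 ≤ a) : Continuous (evenRpow a) :=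
  ((continuous_rpow_const ha).comp (continuous_const.add continuous_id)).add
    ((continuous_rpow_const ha).comp (continuous_const.sub continuous_id))

lemma continuous_oddRpow {a : ℝ} (ha : 0 ≤ a) : Continuous (oddRpow a) :=
  ((continuous_rpow_const ha).comp (continuous_const.add continuous_id)).sub
    ((continuous_rpow_const ha).comp (continuous_const.sub continuous_id))

end Rpow

lemma antitoneOn_Ico_of_hasDerivAt {F F' : ℝ → ℝ} {a b : ℝ}
    (hF : ∀ x ∈ Ico a b, HasDerivAt F (F' x) x) (hF' : ∀ x ∈ Ioo a b, F' x ≤ 0) :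
    AntitoneOn F (Ico a b) := by
  refine antitoneOn_of_hasDerivWithinAt_nonpos (convex_Ico a b)
    (fun x hx => (hF x hx).continuousAt.continuousWithinAt) ?_ (by simpa using hF')
  simpa using fun x hx => (hF x (Ioo_subset_Ico_self hx)).hasDerivWithinAt

noncomputable def entropyProfile (p u : ℝ) : ℝ := evenRpow p u - 2

section EntropyProfile

variable {p u : ℝ}

lemma entropyProfile_neg (p u : ℝ) : entropyProfile p (-u) = entropyProfile p u := by
  simp only [entropyProfile, evenRpow, sub_neg_eq_add, ← sub_eq_add_neg]; ring

lemma entropyProfile_zero (p : ℝ) : entropyProfile p 0 = 0 := by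
  norm_num [entropyProfile, evenRpow]

lemma hasDerivAt_entropyProfile (hu : u ∈ Ioo (-1) 1) :
    HasDerivAt (entropyProfile p) (p * oddRpow (p - 1) u) u :=
  (hasDerivAt_evenRpow p hu).sub_const 2

lemma hasDerivAt_entropyProfile_deriv (hu : u ∈ Ioo (-1) 1) :
    HasDerivAt (fun x => p * oddRpow (p - 1) x) (p * (p - 1) * evenRpow (p - 2) u) u := by
  refine ((hasDerivAt_oddRpow (p - 1) hu).const_mul p).congr_deriv ?_
  rw [show p - 1 - 1 = p - 2 by ring]; ring

lemma hasDerivAt_entropyProfile_deriv2 (hu : u ∈ Ioo (-1) 1) :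
    HasDerivAt (fun x => p * (p - 1) * evenRpow (p - 2) x)
      (p * (p - 1) * (p - 2) * oddRpow (p - 3) u) u := by
  refine ((hasDerivAt_evenRpow (p - 2) hu).const_mul (p * (p - 1))).congr_deriv ?_
  rw [show p - 2 - 1 = p - 3 by ring]; ring

lemma hasDerivAt_entropyProfile_deriv3 (hu : u ∈ Ioo (-1) 1) :
    HasDerivAt (fun x => p * (p - 1) * (p - 2) * oddRpow (p - 3) x)
      (p * (p - 1) * (p - 2) * (p - 3) * evenRpow (p - 4) u) u := by
  refine ((hasDerivAt_oddRpow (p - 3) hu).const_mul (p * (p - 1) * (p - 2))).congr_deriv ?_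
  rw [show p - 3 - 1 = p - 4 by ring]; ring

lemma entropyProfile_deriv3_nonpos (hp : p ∈ Ioo 2 3) (hu : u ∈ Ico 0 1) :
    p * (p - 1) * (p - 2) * oddRpow (p - 3) u ≤ 0 :=
  mul_nonpos_of_nonneg_of_nonpos
    (mul_nonneg (mul_nonneg (by linarith [hp.1]) (by linarith [hp.1])) (by linarith [hp.1]))
    (oddRpow_nonpos (by linarith [hp.2]) hu)

lemma entropyProfile_deriv4_nonpos (hp : p ∈ Ioo 2 3) (hu : u ∈ Icc (-1) 1) :
    p * (p - 1) * (p - 2) * (p - 3) * evenRpow (p - 4) u ≤ 0 :=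
  mul_nonpos_of_nonpos_of_nonneg (mul_nonpos_of_nonneg_of_nonpos
    (mul_nonneg (mul_nonneg (by linarith [hp.1]) (by linarith [hp.1])) (by linarith [hp.1]))
    (by linarith [hp.2])) (evenRpow_nonneg _ hu)

lemma entropyCurvature_deriv_nonpos (hp : p ∈ Ioo 2 3) (hu : u ∈ Ico 0 1) :
    2 * u ^ 2 * (p * (p - 1) * (p - 2) * oddRpow (p - 3) u)
      - (p - 1) * (u * (p * (p - 1) * evenRpow (p - 2) u) - p * oddRpow (p - 1) u) ≤ 0 := by
  refine (antitoneOn_Ico_of_hasDerivAt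
    (F := fun y => 2 * y ^ 2 * (p * (p - 1) * (p - 2) * oddRpow (p - 3) y)
      - (p - 1) * (y * (p * (p - 1) * evenRpow (p - 2) y) - p * oddRpow (p - 1) y))
    (F' := fun y => (5 - p) * y * (p * (p - 1) * (p - 2) * oddRpow (p - 3) y)
      + 2 * y ^ 2 * (p * (p - 1) * (p - 2) * (p - 3) * evenRpow (p - 4) y))
    (fun y hy => ?_) (fun y hy => ?_) ⟨le_rfl, one_pos⟩ hu hu.1).trans_eq (by simp [oddRpow])
  · have hdom : y ∈ Ioo (-1) 1 := ⟨by linarith [hy.1], hy.2⟩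
    refine ((((hasDerivAt_pow 2 y).const_mul 2).mul (hasDerivAt_entropyProfile_deriv3 hdom)).sub
      ((((hasDerivAt_id y).mul (hasDerivAt_entropyProfile_deriv2 hdom)).sub
        (hasDerivAt_entropyProfile_deriv hdom)).const_mul (p - 1))).congr_deriv ?_
    simp only [id]; ring
  · exact add_nonpos (mul_nonpos_of_nonneg_of_nonpos
      (mul_nonneg (by linarith [hp.2]) hy.1.le) (entropyProfile_deriv3_nonpos hp ⟨hy.1.le, hy.2⟩))
      (mul_nonpos_of_nonneg_of_nonpos (by positivity)
        (entropyProfile_deriv4_nonpos hp ⟨by linarith [hy.1], hy.2.le⟩))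

/-- This is `u³ (H(u) / u²)'` for `H = dissipationExcess p`; it vanishes to second order at `0`,
and its second derivative `(5 - p) u g''' + 2 u² g''''` is nonpositive. -/
lemma entropyCurvature_nonpos (hp : p ∈ Ioo 2 3) (hu : u ∈ Ico 0 1) :
    2 * u ^ 2 * (p * (p - 1) * evenRpow (p - 2) u) - (p + 3) * u * (p * oddRpow (p - 1) u)
      + 2 * (p + 1) * entropyProfile p u ≤ 0 := by
  refine (antitoneOn_Ico_of_hasDerivAt
    (F := fun y => 2 * y ^ 2 * (p * (p - 1) * evenRpow (p - 2) y)
      - (p + 3) * y * (p * oddRpow (p - 1) y) + 2 * (p + 1) * entropyProfile p y)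
    (fun y hy => ?_) (fun y hy => entropyCurvature_deriv_nonpos hp (Ioo_subset_Ico_self hy))
    ⟨le_rfl, one_pos⟩ hu hu.1).trans_eq (by simp [entropyProfile_zero])
  have hdom : y ∈ Ioo (-1) 1 := ⟨by linarith [hy.1], hy.2⟩
  refine ((((hasDerivAt_pow 2 y).const_mul 2).mul (hasDerivAt_entropyProfile_deriv2 hdom)).sub
    (((hasDerivAt_id y).const_mul (p + 3)).mul (hasDerivAt_entropyProfile_deriv hdom))
    |>.add ((hasDerivAt_entropyProfile hdom).const_mul (2 * (p + 1)))).congr_deriv ?_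
  simp only [id]; ring

end EntropyProfile

noncomputable def dissipationExcess (p u : ℝ) : ℝ :=
  2 * u * (p * oddRpow (p - 1) u) - (p + 1) * entropyProfile p u

section Dissipation

variable {p : ℝ}

lemma dissipationExcess_one_nonneg (hp : p ∈ Ioo 2 3) : 0 ≤ dissipationExcess p 1 := by
  obtain ⟨hp2, hp3⟩ := hp
  have hbernoulli : (2 : ℝ) ^ (p - 2) ≤ 1 + (p - 2) * 1 := by
    simpa [one_add_one_eq_two] using
      rpow_one_add_le_one_add_mul_self (s := 1) (by norm_num) (by linarith) (by linarith)
  have hpow1 : (2 : ℝ) ^ (p - 1) = 2 ^ (p - 2) * 2 := by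
    rw [← rpow_add_one two_ne_zero]; ring_nf
  have hpow2 : (2 : ℝ) ^ p = 2 ^ (p - 2) * 4 := by
    rw [show (4 : ℝ) = 2 ^ (2 : ℝ) by norm_num, ← rpow_add two_pos]; ring_nf
  simp only [dissipationExcess, entropyProfile, evenRpow, oddRpow]
  norm_num [zero_rpow (show p ≠ 0 by linarith), zero_rpow (show p - 1 ≠ 0 by linarith)]
  rw [hpow1, hpow2]
  linarith

lemma hasDerivAt_dissipationExcess {u : ℝ} (hu : u ∈ Ioo (-1) 1) :
    HasDerivAt (dissipationExcess p) (2 * (p * oddRpow (p - 1) u)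
      + 2 * u * (p * (p - 1) * evenRpow (p - 2) u) - (p + 1) * (p * oddRpow (p - 1) u)) u :=
  ((((hasDerivAt_id u).const_mul 2).mul (hasDerivAt_entropyProfile_deriv hu)).sub
    ((hasDerivAt_entropyProfile hu).const_mul (p + 1))).congr_deriv (by simp only [id]; ring)

lemma antitoneOn_dissipationExcess_div_sq (hp : p ∈ Ioo 2 3) :
    AntitoneOn (fun u => dissipationExcess p u / u ^ 2) (Ioc 0 1) := by
  have hcont : Continuous (dissipationExcess p) :=
    ((continuous_const.mul continuous_id).mul
      (continuous_const.mul (continuous_oddRpow (by linarith [hp.1])))).sub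
      (continuous_const.mul ((continuous_evenRpow (by linarith [hp.1])).sub continuous_const))
  refine antitoneOn_of_hasDerivWithinAt_nonpos (convex_Ioc 0 1)
    (hcont.continuousOn.div (continuous_pow 2).continuousOn fun x hx => (pow_pos hx.1 2).ne')
    (f' := fun u => (u * (2 * u ^ 2 * (p * (p - 1) * evenRpow (p - 2) u)
      - (p + 3) * u * (p * oddRpow (p - 1) u) + 2 * (p + 1) * entropyProfile p u)) / (u ^ 2) ^ 2)
    (fun u hu => ?_) (fun u hu => ?_)
  · rw [interior_Ioc] at hu
    have hdom : u ∈ Ioo (-1) 1 := ⟨by linarith [hu.1], hu.2⟩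
    refine ((hasDerivAt_dissipationExcess hdom).div (hasDerivAt_pow 2 u)
      (pow_pos hu.1 2).ne').hasDerivWithinAt.congr_deriv ?_
    simp only [dissipationExcess]; ring
  · rw [interior_Ioc] at hu
    exact div_nonpos_of_nonpos_of_nonneg (mul_nonpos_of_nonneg_of_nonpos hu.1.le
      (entropyCurvature_nonpos hp ⟨hu.1.le, hu.2⟩)) (by positivity)

lemma dissipationExcess_nonneg (hp : p ∈ Ioo 2 3) {u : ℝ} (hu : u ∈ Ioc 0 1) :
    0 ≤ dissipationExcess p u := by
  have h : dissipationExcess p 1 / 1 ^ 2 ≤ dissipationExcess p u / u ^ 2 :=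
    antitoneOn_dissipationExcess_div_sq hp hu ⟨one_pos, le_rfl⟩ hu.2
  rw [one_pow, div_one, le_div_iff₀ (pow_pos hu.1 2)] at h
  exact (mul_nonneg (dissipationExcess_one_nonneg hp) (sq_nonneg u)).trans h

end Dissipation

section Decay

variable {p : ℝ}

lemma monotoneOn_entropyProfile_div_rpow (hp : p ∈ Ioo 2 3) :
    MonotoneOn (fun u => entropyProfile p u / u ^ ((p + 1) / 2)) (Ioc 0 1) := by
  set c := (p + 1) / 2
  refine monotoneOn_of_hasDerivWithinAt_nonneg (convex_Ioc 0 1)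
    (((continuous_evenRpow (by linarith [hp.1])).sub continuous_const).continuousOn.div
      (continuous_rpow_const (div_nonneg (by linarith [hp.1]) two_pos.le)).continuousOn
      fun x hx => (rpow_pos_of_pos hx.1 c).ne')
    (f' := fun u => (p * oddRpow (p - 1) u * u ^ c - entropyProfile p u * (c * u ^ (c - 1)))
      / (u ^ c) ^ 2)
    (fun u hu => ?_) (fun u hu => ?_) <;> rw [interior_Ioc] at hu
  · exact ((hasDerivAt_entropyProfile ⟨by linarith [hu.1], hu.2⟩).div
      (hasDerivAt_rpow_const (Or.inl hu.1.ne')) (rpow_pos_of_pos hu.1 c).ne').hasDerivWithinAt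
  · have hnum : p * oddRpow (p - 1) u * u ^ c - entropyProfile p u * (c * u ^ (c - 1))
        = u ^ (c - 1) * dissipationExcess p u / 2 := by
      rw [show u ^ c = u ^ (c - 1) * u by rw [← rpow_add_one hu.1.ne']; ring_nf]
      simp only [dissipationExcess, c]; ring
    rw [hnum]
    exact div_nonneg (div_nonneg (mul_nonneg (rpow_nonneg hu.1.le _)
      (dissipationExcess_nonneg hp ⟨hu.1, hu.2.le⟩)) two_pos.le) (sq_nonneg _)

lemma entropyProfile_mul_le (hp : p ∈ Ioo 2 3) {s w : ℝ} (hs : s ∈ Ioc 0 1) (hw : |w| ≤ 1) :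
    entropyProfile p (s * w) ≤ s ^ ((p + 1) / 2) * entropyProfile p w := by
  wlog hw0 : 0 < w generalizing w
  · rcases (not_lt.1 hw0).eq_or_lt with rfl | hneg
    · simp [entropyProfile_zero]
    · simpa [entropyProfile_neg] using this (w := -w) (by rwa [abs_neg]) (neg_pos.2 hneg)
  have hw1 : w ≤ 1 := (le_abs_self w).trans hw
  have hsw : s * w ≤ w := mul_le_of_le_one_left hw0.le hs.2
  have h := monotoneOn_entropyProfile_div_rpow hp ⟨mul_pos hs.1 hw0, hsw.trans hw1⟩
    ⟨hw0, hw1⟩ hsw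
  rw [div_le_div_iff₀ (rpow_pos_of_pos (mul_pos hs.1 hw0) _) (rpow_pos_of_pos hw0 _),
    mul_rpow hs.1.le hw0.le] at h
  exact le_of_mul_le_mul_right (h.trans_eq (by ring)) (rpow_pos_of_pos hw0 _)

end Decay

lemma eq_mul_exp_of_hasDerivAt {y : ℝ → ℝ} {c : ℝ} (hy : ∀ t, HasDerivAt y (c * y t) t) (t : ℝ) :
    y t = y 0 * exp (c * t) := by
  have hderiv : ∀ t, HasDerivAt (fun t => y t * exp (-(c * t))) 0 t := fun t => by
    refine ((hy t).mul (((hasDerivAt_id t).const_mul c).neg.exp)).congr_deriv ?_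
    simp only [id]; ring
  have hconst := is_const_of_deriv_eq_zero (fun t => (hderiv t).differentiableAt)
    (fun t => (hderiv t).deriv) t 0
  simp only [mul_zero, neg_zero, exp_zero, mul_one] at hconst
  rw [← hconst, mul_assoc, ← exp_add, neg_add_cancel, exp_zero, mul_one]

lemma twoVelocity_sum_diff {lam : ℝ} {f : ℝ → ℝ × ℝ}
    (hode : ∀ t, HasDerivAt f (lam • (-(f t).1 + (f t).2, (f t).1 - (f t).2)) t) (t : ℝ) :
    (f t).1 + (f t).2 = (f 0).1 + (f 0).2 ∧
      (f t).1 - (f t).2 = ((f 0).1 - (f 0).2) * exp (-(2 * lam) * t) := by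
  have h1 t : HasDerivAt (fun t => (f t).1) (lam * (-(f t).1 + (f t).2)) t := by
    simpa using (hode t).hasFDerivAt.fst.hasDerivAt
  have h2 t : HasDerivAt (fun t => (f t).2) (lam * ((f t).1 - (f t).2)) t := by
    simpa using (hode t).hasFDerivAt.snd.hasDerivAt
  constructor
  · simpa using eq_mul_exp_of_hasDerivAt (c := 0)
      (fun t => ((h1 t).add (h2 t)).congr_deriv (by ring)) t
  · exact eq_mul_exp_of_hasDerivAt
      (fun t => ((h1 t).sub (h2 t)).congr_deriv (by simp only [Pi.sub_apply]; ring)) t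

lemma relEntropy_eq_entropyProfile {p : ℝ} {ψ : ℝ → ℝ} (hψ : ∀ σ, ψ σ = σ ^ p - 1 - p * (σ - 1))
    {x y : ℝ} (hxy : x + y = 1) :
    ψ (2 * x) * (1 / 2) + ψ (2 * y) * (1 / 2) = entropyProfile p (x - y) / 2 := by
  rw [show 2 * x = 1 + (x - y) by linarith, show 2 * y = 1 - (x - y) by linarith]
  simp only [hψ, entropyProfile, evenRpow]
  ring

/-- for `p ∈ (2,3)`, the relative entropy `e_p` generated by
`ψ_p(σ) = σ^p - 1 - p(σ-1)` decays at rate `(p+1)λ` along the two-velocity BGK ODE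
`df/dt = λ A f` with `A = [[-1,1],[1,-1]]` and steady state `f^∞ = (1/2,1/2)`.
Here `e_p(f|f^∞) = ψ_p(2 f₁)·(1/2) + ψ_p(2 f₂)·(1/2)`. -/
theorem stmt_4
    (p : ℝ) (hp : p ∈ Set.Ioo (2:ℝ) 3)
    (lam : ℝ) (hlam : 0 < lam)
    (ψp : ℝ → ℝ) (hψp : ∀ σ : ℝ, ψp σ = σ ^ p - 1 - p * (σ - 1))
    (fI : ℝ × ℝ) (hI1 : 0 ≤ fI.1) (hI2 : 0 ≤ fI.2) (hIsum : fI.1 + fI.2 = 1)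
    (f : ℝ → ℝ × ℝ)
    (hf0 : f 0 = fI)
    (hode : ∀ t : ℝ, HasDerivAt f (lam • (-(f t).1 + (f t).2, (f t).1 - (f t).2)) t) :
    ∀ t : ℝ, 0 ≤ t →
      ψp (2 * (f t).1) * (1/2) + ψp (2 * (f t).2) * (1/2) ≤
        Real.exp (-((p + 1) * lam) * t) *
          (ψp (2 * fI.1) * (1/2) + ψp (2 * fI.2) * (1/2)) := by
  intro t ht
  obtain ⟨hsum, hdiff⟩ := twoVelocity_sum_diff hode t
  rw [hf0] at hsum hdiff
  have hs : exp (-(2 * lam) * t) ∈ Ioc 0 1 := ⟨exp_pos _, exp_le_one_iff.2 (by nlinarith)⟩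
  have hrate : exp (-((p + 1) * lam) * t) = exp (-(2 * lam) * t) ^ ((p + 1) / 2) := by
    rw [← exp_mul]; ring_nf
  have hw : |fI.1 - fI.2| ≤ 1 := abs_le.2 ⟨by linarith, by linarith⟩
  rw [relEntropy_eq_entropyProfile hψp (hsum.trans hIsum),
    relEntropy_eq_entropyProfile hψp hIsum, hdiff, hrate, mul_comm _ (exp _)]
  linarith [entropyProfile_mul_le hp hs hw]
end

section
/- Let p ∈ (2, 3) and set ψ_p(σ) := σ^p − 1 − p(σ − 1), ψ_3(σ) := σ³ − 1 − 3(σ − 1), and C_p := 4/(2^p − 1 − p). Then: (1) ψ_p(σ) ≤ ψ_3(σ) for all σ ≥ 0; (2) ψ_3(σ) ≤ C_p ψ_p(σ) for all σ ∈ [0, 2]. Consequently, if f(t) solves the ODE df/dt = λ A f on ℝ² with λ > 0, A = [[−1, 1], [1, −1]], nonnegative normalized initial datum f^I (f_1^I + f_2^I = 1) and steady state f^∞ = (1/2, 1/2), then e_p(f(t)|f^∞) ≤ C_p e^{−4λ t} e_p(f^I|f^∞) for all t ≥ 0. -/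
open Real Set

/-!
`ψ₃ - ψ_p` vanishes at `1`, decreases on `[0, 1]` and increases on `[1, ∞)`.

For the reverse bound, `g = C_p ψ_p - ψ₃` vanishes to second order at `1`, and `C_p` is chosen so
that `g 2 = 0`. Its second derivative `x ^ (p - 2) * (M - 6 x ^ (3 - p))`, with
`M = C_p p (p - 1) ≥ 6`, is nonnegative up to some `c ≥ 1` and nonpositive after. So `g` is convex
on `[0, c]`, where it lies above its zero tangent at `1`, and concave on `[c, 2]`, where it lies
above the smaller of its endpoint values. The bound `M ≥ 6` is `3 * 2 ^ p ≤ 2 p ^ 2 + p + 3`, which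
holds on `[2, 3]` because the difference is concave there with endpoint values `1` and `0`.

Along the flow the mass is conserved and `f₁ - f₂` decays like `e^{-2λt}`, so `2 f_j = 1 ± s` with
`s` decaying at that rate. As `ψ₃ (1 + s) + ψ₃ (1 - s) = 6 s ^ 2`, the cubic entropy decays exactly
like `e^{-4λt}`, and the two comparisons transfer this to `e_p` at the cost of the factor `C_p`.
-/

section Calculus

variable {g g' g'' : ℝ → ℝ} {a b : ℝ}

lemma convexOn_Icc_of_hasDerivAt2_nonneg (hg : ∀ x, HasDerivAt g (g' x) x)
    (hg' : ∀ x, HasDerivAt g' (g'' x) x) (h : ∀ x ∈ Icc a b, 0 ≤ g'' x) :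
    ConvexOn ℝ (Icc a b) g :=
  convexOn_of_hasDerivWithinAt2_nonneg (convex_Icc a b)
    (HasDerivAt.continuousOn fun x _ => hg x) (fun x _ => (hg x).hasDerivWithinAt)
    (fun x _ => (hg' x).hasDerivWithinAt) fun x hx => h x (interior_subset hx)

lemma concaveOn_Icc_of_hasDerivAt2_nonpos (hg : ∀ x, HasDerivAt g (g' x) x)
    (hg' : ∀ x, HasDerivAt g' (g'' x) x) (h : ∀ x ∈ Icc a b, g'' x ≤ 0) :
    ConcaveOn ℝ (Icc a b) g :=
  concaveOn_of_hasDerivWithinAt2_nonpos (convex_Icc a b)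
    (HasDerivAt.continuousOn fun x _ => hg x) (fun x _ => (hg x).hasDerivWithinAt)
    (fun x _ => (hg' x).hasDerivWithinAt) fun x hx => h x (interior_subset hx)

lemma isMinOn_Icc_of_hasDerivAt_nonpos_of_nonneg {s t : ℝ} (hg : ∀ x, HasDerivAt g (g' x) x)
    (hleft : ∀ x ∈ Icc s a, g' x ≤ 0) (hright : ∀ x ∈ Icc a t, 0 ≤ g' x) :
    IsMinOn g (Icc s t) a := by
  have hcont : ContinuousOn g univ := HasDerivAt.continuousOn fun x _ => hg x
  refine isMinOn_iff.2 ?_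
  rintro x ⟨hsx, hxt⟩
  rcases le_total x a with hxa | hax
  · exact antitoneOn_of_hasDerivWithinAt_nonpos (convex_Icc s a) (hcont.mono (subset_univ _))
      (fun y _ => (hg y).hasDerivWithinAt) (fun y hy => hleft y (interior_subset hy))
      ⟨hsx, hxa⟩ ⟨hsx.trans hxa, le_rfl⟩ hxa
  · exact monotoneOn_of_hasDerivWithinAt_nonneg (convex_Icc a t) (hcont.mono (subset_univ _))
      (fun y _ => (hg y).hasDerivWithinAt) (fun y hy => hright y (interior_subset hy))
      ⟨le_rfl, hax.trans hxt⟩ ⟨hax, hxt⟩ hax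

lemma ConvexOn.add_mul_sub_le_of_hasDerivAt {S : Set ℝ} {d x : ℝ} (hg : ConvexOn ℝ S g)
    (ha : a ∈ S) (hd : HasDerivAt g d a) (hx : x ∈ S) : g a + d * (x - a) ≤ g x := by
  rcases lt_trichotomy x a with hxa | rfl | hax
  · have hslope := hg.slope_le_of_hasDerivAt hx ha hxa hd
    rw [slope_def_field, div_le_iff₀ (sub_pos.2 hxa)] at hslope
    linarith
  · simp
  · have hslope := hg.le_slope_of_hasDerivAt ha hx hax hd
    rw [slope_def_field, le_div_iff₀ (sub_pos.2 hax)] at hslope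
    linarith

lemma nonneg_of_convexOn_of_concaveOn {s c : ℝ} (hconv : ConvexOn ℝ (Icc s c) g)
    (hconc : ConcaveOn ℝ (Icc c b) g) (ha : a ∈ Icc s c) (hga : g a = 0) (hd : HasDerivAt g 0 a)
    (hb : 0 ≤ g b) : ∀ x ∈ Icc s b, 0 ≤ g x := by
  have hleft : ∀ x ∈ Icc s c, 0 ≤ g x := fun x hx => by
    simpa [hga] using hconv.add_mul_sub_le_of_hasDerivAt ha hd hx
  rintro x ⟨hsx, hxb⟩
  rcases le_total x c with hxc | hcx
  · exact hleft x ⟨hsx, hxc⟩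
  · calc 0 ≤ min (g c) (g b) := le_min (hleft c ⟨ha.1.trans ha.2, le_rfl⟩) hb
      _ ≤ g x := hconc.min_le_of_mem_Icc ⟨le_rfl, hcx.trans hxb⟩ ⟨hcx.trans hxb, le_rfl⟩ ⟨hcx, hxb⟩

lemma eq_mul_exp_of_hasDerivAt_s5 {u : ℝ → ℝ} {k : ℝ} (hu : ∀ t, HasDerivAt u (k * u t) t)
    (t : ℝ) : u t = u 0 * exp (k * t) := by
  have hv : ∀ s, HasDerivAt (fun s => u s * exp (-k * s)) 0 s := fun s => by
    have he : HasDerivAt (fun s => -k * s) (-k) s := by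
      simpa using (hasDerivAt_id s).const_mul (-k)
    exact ((hu s).mul he.exp).congr_deriv (by ring)
  have hconst := is_const_of_deriv_eq_zero (fun s => (hv s).differentiableAt)
    (fun s => (hv s).deriv) t 0
  simp only [mul_zero, exp_zero, mul_one] at hconst
  rw [← hconst, mul_assoc, ← exp_add, neg_mul, neg_add_cancel, exp_zero, mul_one]

end Calculus

noncomputable def psi (p σ : ℝ) : ℝ := σ ^ p - 1 - p * (σ - 1)

section Psi

variable {p : ℝ}

lemma psi_one (p : ℝ) : psi p 1 = 0 := by simp [psi]

lemma psi_two (p : ℝ) : psi p 2 = 2 ^ p - 1 - p := by rw [psi]; ring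

lemma psi_three (σ : ℝ) : psi 3 σ = σ ^ 3 - 1 - 3 * (σ - 1) := by rw [psi, rpow_ofNat]

lemma psi_three_one_add_add_psi_three_one_sub (s : ℝ) :
    psi 3 (1 + s) + psi 3 (1 - s) = 6 * s ^ 2 := by
  rw [psi_three, psi_three]; ring

lemma hasDerivAt_psi (hp : 1 ≤ p) (x : ℝ) :
    HasDerivAt (psi p) (p * (x ^ (p - 1) - 1)) x := by
  have hlin : HasDerivAt (fun σ : ℝ => p * (σ - 1)) p x := by
    simpa using ((hasDerivAt_id x).sub_const 1).const_mul p
  exact (((hasDerivAt_rpow_const (Or.inr hp)).sub_const 1).sub hlin).congr_deriv (by ring)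

lemma hasDerivAt_deriv_psi (hp : 2 ≤ p) (x : ℝ) :
    HasDerivAt (fun x => p * (x ^ (p - 1) - 1)) (p * (p - 1) * x ^ (p - 2)) x := by
  have h := (hasDerivAt_rpow_const (x := x) (p := p - 1) (Or.inr (by linarith))).sub_const 1
  rw [show p - 1 - 1 = p - 2 by ring] at h
  exact (h.const_mul p).congr_deriv (by ring)

theorem psi_le_psi_three {σ : ℝ} (hp1 : 1 ≤ p) (hp3 : p ≤ 3) (hσ : 0 ≤ σ) :
    psi p σ ≤ psi 3 σ := by
  have hmin := isMinOn_Icc_of_hasDerivAt_nonpos_of_nonneg (g := psi 3 - psi p) (a := 1) (s := 0)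
    (t := σ + 1)
    (fun x => (hasDerivAt_psi (p := 3) (by norm_num) x).sub (hasDerivAt_psi hp1 x))
    (fun x ⟨hx0, hx1⟩ => by
      have h1 : x ^ ((3:ℝ) - 1) ≤ x ^ (p - 1) :=
        rpow_le_rpow_of_exponent_ge' hx0 hx1 (by linarith) (by linarith)
      have h2 : x ^ (p - 1) ≤ 1 := rpow_le_one hx0 hx1 (by linarith)
      nlinarith)
    (fun x ⟨hx1, _⟩ => by
      have h1 : x ^ (p - 1) ≤ x ^ ((3:ℝ) - 1) := rpow_le_rpow_of_exponent_le hx1 (by linarith)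
      have h2 : 1 ≤ x ^ (p - 1) := one_le_rpow hx1 (by linarith)
      nlinarith)
  have hσmin := isMinOn_iff.1 hmin σ ⟨hσ, by linarith⟩
  simp only [Pi.sub_apply, psi_one, sub_zero] at hσmin
  linarith

end Psi

lemma three_mul_two_rpow_le {p : ℝ} (hp : p ∈ Icc (2:ℝ) 3) : 3 * 2 ^ p ≤ 2 * p ^ 2 + p + 3 := by
  have hexp : ∀ q : ℝ, HasDerivAt (fun q : ℝ => (2:ℝ) ^ q) (2 ^ q * log 2) q :=
    fun q => (hasStrictDerivAt_const_rpow two_pos q).hasDerivAt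
  have hh : ∀ q : ℝ, HasDerivAt (fun q : ℝ => 2 * q ^ 2 + q + 3 - 3 * 2 ^ q)
      (4 * q + 1 - 3 * (2 ^ q * log 2)) q := fun q => by
    have := ((((hasDerivAt_pow 2 q).const_mul 2).add (hasDerivAt_id q)).add_const 3).sub
      ((hexp q).const_mul 3)
    exact this.congr_deriv (by simp only [Nat.cast_ofNat, Nat.add_one_sub_one, pow_one]; ring)
  have hh' : ∀ q : ℝ, HasDerivAt (fun q : ℝ => 4 * q + 1 - 3 * (2 ^ q * log 2))
      (4 - 3 * (2 ^ q * log 2 * log 2)) q := fun q => by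
    have := ((((hasDerivAt_id q).const_mul 4).add_const 1).sub
      (((hexp q).mul_const (log 2)).const_mul 3))
    exact this.congr_deriv (by simp)
  have hconc := concaveOn_Icc_of_hasDerivAt2_nonpos (a := 2) (b := 3) hh hh' fun q hq => by
    have h4 : (2:ℝ) ^ (2:ℝ) ≤ 2 ^ q := rpow_le_rpow_of_exponent_le one_le_two hq.1
    have hlog : (1 / 3 : ℝ) ≤ log 2 * log 2 := by nlinarith [log_two_gt_d9]
    norm_num at h4
    nlinarith [mul_le_mul h4 hlog (by norm_num) (by positivity)]
  have := hconc.min_le_of_mem_Icc (left_mem_Icc.2 (by norm_num)) (right_mem_Icc.2 (by norm_num)) hp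
  norm_num at this
  linarith

lemma one_add_lt_two_rpow {p : ℝ} (hp : 1 < p) : 1 + p < 2 ^ p := by
  have := one_add_mul_self_lt_rpow_one_add (s := 1) (by norm_num) one_ne_zero hp
  norm_num at this
  exact this

theorem psi_three_le_mul_psi {p σ : ℝ} (hp2 : 2 ≤ p) (hp3 : p < 3) (hσ : σ ∈ Icc (0:ℝ) 2) :
    psi 3 σ ≤ 4 / (2 ^ p - 1 - p) * psi p σ := by
  have hD : 0 < 2 ^ p - 1 - p := by linarith [one_add_lt_two_rpow (by linarith : 1 < p)]
  have hM : 6 ≤ 4 / (2 ^ p - 1 - p) * (p * (p - 1)) := by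
    rw [div_mul_eq_mul_div, le_div_iff₀ hD]
    nlinarith [three_mul_two_rpow_le ⟨hp2, hp3.le⟩]
  set C := 4 / (2 ^ p - 1 - p) with hC
  set M := C * (p * (p - 1))
  have hg : ∀ x, HasDerivAt (fun x => C * psi p x - psi 3 x)
      (C * (p * (x ^ (p - 1) - 1)) - 3 * (x ^ ((3:ℝ) - 1) - 1)) x := fun x =>
    ((hasDerivAt_psi (by linarith) x).const_mul C).sub (hasDerivAt_psi (p := 3) (by norm_num) x)
  have hg' : ∀ x, HasDerivAt (fun x => C * (p * (x ^ (p - 1) - 1)) - 3 * (x ^ ((3:ℝ) - 1) - 1))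
      (C * (p * (p - 1) * x ^ (p - 2)) - 3 * (3 - 1) * x ^ ((3:ℝ) - 2)) x := fun x =>
    ((hasDerivAt_deriv_psi hp2 x).const_mul C).sub (hasDerivAt_deriv_psi (p := 3) (by norm_num) x)
  have hg'' : ∀ x, 0 ≤ x → C * (p * (p - 1) * x ^ (p - 2)) - 3 * (3 - 1) * x ^ ((3:ℝ) - 2) =
      x ^ (p - 2) * (M - 6 * x ^ (3 - p)) := fun x hx => by
    have hsplit : x ^ ((3:ℝ) - 2) = x ^ (p - 2) * x ^ (3 - p) := by
      rw [← rpow_add' hx (by linarith)]; ring_nf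
    rw [hsplit]; ring
  set c := (M / 6) ^ (3 - p)⁻¹
  have h3p : 0 < 3 - p := by linarith
  have hc1 : 1 ≤ c :=
    (le_rpow_inv_iff_of_pos zero_le_one (by linarith) h3p).2 (by rw [one_rpow]; linarith)
  have key := nonneg_of_convexOn_of_concaveOn (s := 0) (a := 1) (b := 2)
    (convexOn_Icc_of_hasDerivAt2_nonneg hg hg' fun x ⟨hx0, hxc⟩ => by
      have := (le_rpow_inv_iff_of_pos hx0 (by linarith) h3p).1 hxc
      rw [hg'' x hx0]
      exact mul_nonneg (rpow_nonneg hx0 _) (by linarith))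
    (concaveOn_Icc_of_hasDerivAt2_nonpos hg hg' fun x ⟨hcx, _⟩ => by
      have hx0 : 0 ≤ x := by linarith
      have := (rpow_inv_le_iff_of_pos (by linarith) hx0 h3p).1 hcx
      rw [hg'' x hx0]
      exact mul_nonpos_of_nonneg_of_nonpos (rpow_nonneg hx0 _) (by linarith))
    ⟨zero_le_one, hc1⟩ (by simp [psi_one]) (by simpa using hg 1)
    (by simp only [psi_two, hC]; field_simp; norm_num) σ hσ
  linarith

lemma two_velocity_sum_and_diff {lam : ℝ} {f : ℝ → ℝ × ℝ}
    (hf : ∀ t, HasDerivAt f (lam • (-(f t).1 + (f t).2, (f t).1 - (f t).2)) t) (t : ℝ) :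
    (f t).1 + (f t).2 = (f 0).1 + (f 0).2 ∧
      (f t).1 - (f t).2 = ((f 0).1 - (f 0).2) * exp (-(2 * lam) * t) := by
  have h1 : ∀ s, HasDerivAt (fun u => (f u).1) (lam * (-(f s).1 + (f s).2)) s := fun s => by
    simpa using (hf s).hasFDerivAt.fst.hasDerivAt
  have h2 : ∀ s, HasDerivAt (fun u => (f u).2) (lam * ((f s).1 - (f s).2)) s := fun s => by
    simpa using (hf s).hasFDerivAt.snd.hasDerivAt
  constructor
  · simpa using eq_mul_exp_of_hasDerivAt_s5 (k := 0)
      (fun s => ((h1 s).add (h2 s)).congr_deriv (by ring)) t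
  · exact eq_mul_exp_of_hasDerivAt_s5
      (fun s => ((h1 s).sub (h2 s)).congr_deriv (by simp only [Pi.sub_apply]; ring)) t

theorem psi_one_add_add_psi_one_sub_le {p c r : ℝ} (hp2 : 2 ≤ p) (hp3 : p < 3)
    (hc : c ∈ Icc (-1:ℝ) 1) (hr : r ∈ Icc (0:ℝ) 1) :
    psi p (1 + r * c) + psi p (1 - r * c) ≤
      4 / (2 ^ p - 1 - p) * r ^ 2 * (psi p (1 + c) + psi p (1 - c)) := by
  obtain ⟨hc1, hc2⟩ := hc
  obtain ⟨hr0, hr1⟩ := hr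
  have hrc : |r * c| ≤ 1 := by
    rw [abs_mul, abs_of_nonneg hr0]
    exact mul_le_one₀ hr1 (abs_nonneg c) (abs_le.2 ⟨hc1, hc2⟩)
  obtain ⟨hrc1, hrc2⟩ := abs_le.1 hrc
  calc psi p (1 + r * c) + psi p (1 - r * c)
      ≤ psi 3 (1 + r * c) + psi 3 (1 - r * c) :=
        add_le_add (psi_le_psi_three (by linarith) hp3.le (by linarith))
          (psi_le_psi_three (by linarith) hp3.le (by linarith))
    _ = r ^ 2 * (psi 3 (1 + c) + psi 3 (1 - c)) := by
        rw [psi_three_one_add_add_psi_three_one_sub, psi_three_one_add_add_psi_three_one_sub]; ring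
    _ ≤ r ^ 2 * (4 / (2 ^ p - 1 - p) * psi p (1 + c) + 4 / (2 ^ p - 1 - p) * psi p (1 - c)) := by
        gcongr
        · exact psi_three_le_mul_psi hp2 hp3 ⟨by linarith, by linarith⟩
        · exact psi_three_le_mul_psi hp2 hp3 ⟨by linarith, by linarith⟩
    _ = _ := by ring

/-- for `p ∈ (2,3)` and `C_p = 4/(2^p - 1 - p)`:
(1) `ψ_p ≤ ψ_3` on `[0,∞)`; (2) `ψ_3 ≤ C_p ψ_p` on `[0,2]`; consequently the
relative entropy `e_p` decays along the two-velocity BGK ODE at the optimal rate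
`4λ` with multiplicative constant `C_p`. -/
theorem stmt_5
    (p : ℝ) (hp : p ∈ Set.Ioo (2:ℝ) 3)
    (ψp ψ3 : ℝ → ℝ)
    (hψp : ∀ σ : ℝ, ψp σ = σ ^ p - 1 - p * (σ - 1))
    (hψ3 : ∀ σ : ℝ, ψ3 σ = σ ^ (3:ℕ) - 1 - 3 * (σ - 1))
    (Cp : ℝ) (hCp : Cp = 4 / ((2:ℝ) ^ p - 1 - p)) :
    (∀ σ : ℝ, 0 ≤ σ → ψp σ ≤ ψ3 σ) ∧
    (∀ σ ∈ Set.Icc (0:ℝ) 2, ψ3 σ ≤ Cp * ψp σ) ∧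
    (∀ lam : ℝ, 0 < lam →
      ∀ fI : ℝ × ℝ, 0 ≤ fI.1 → 0 ≤ fI.2 → fI.1 + fI.2 = 1 →
      ∀ f : ℝ → ℝ × ℝ, f 0 = fI →
      (∀ t : ℝ, HasDerivAt f (lam • (-(f t).1 + (f t).2, (f t).1 - (f t).2)) t) →
      ∀ t : ℝ, 0 ≤ t →
        ψp (2 * (f t).1) * (1/2) + ψp (2 * (f t).2) * (1/2) ≤
          Cp * Real.exp (-(4 * lam) * t) *
            (ψp (2 * fI.1) * (1/2) + ψp (2 * fI.2) * (1/2))) := by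
  obtain ⟨hp2, hp3⟩ := hp
  obtain rfl : ψp = psi p := funext hψp
  obtain rfl : ψ3 = psi 3 := funext fun σ => (hψ3 σ).trans (psi_three σ).symm
  subst hCp
  refine ⟨fun σ hσ => psi_le_psi_three (by linarith) hp3.le hσ,
    fun σ hσ => psi_three_le_mul_psi hp2.le hp3 hσ, ?_⟩
  intro lam hlam fI hfI1 hfI2 hsum f hf0 hf t ht
  obtain ⟨hS, hD⟩ := two_velocity_sum_and_diff hf t
  rw [hf0] at hS hD
  set r := exp (-(2 * lam) * t)
  have hr : r ∈ Icc (0:ℝ) 1 := ⟨(exp_pos _).le, exp_le_one_iff.2 (by nlinarith)⟩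
  have hr2 : r ^ 2 = exp (-(4 * lam) * t) := by rw [← exp_nat_mul]; ring_nf
  have key := psi_one_add_add_psi_one_sub_le hp2.le hp3
    (c := fI.1 - fI.2) ⟨by linarith, by linarith⟩ hr
  rw [show 2 * (f t).1 = 1 + r * (fI.1 - fI.2) by linarith,
    show 2 * (f t).2 = 1 - r * (fI.1 - fI.2) by linarith,
    show 2 * fI.1 = 1 + (fI.1 - fI.2) by linarith, show 2 * fI.2 = 1 - (fI.1 - fI.2) by linarith,
    ← hr2]
  linarith
end
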